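/- arXiv:2411.08671 — 2 statements merged into one kernel-verified Lean document; each statement's English description precedes it below -/
import Mathlib

section
/- Byte-Pair Encoding is a (1/3)-approximation for the optimal pair encoding problem: for every string s and every k, bpe(s,k) ≥ OPT(s,k)/3. -/
/-!
Both sides are compared through `k`-packings: `k` disjoint families of pairwise non-overlapping
occurrences of one pair each. Undoing a partial merge sequence from the end yields a `k`-packing
of `s` of size at least the length reduction: the occurrences of the new symbol `c` expand to a
family of pairs `ab`, and the families built so far are transported along the expansion.

Conversely, a greedy merge of `ab` into `c` shortens `s` by the number `d` of new symbols `c`,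
and turns a `(k + 1)`-packing of `s` into a `k`-packing of the result losing at most `3 d`
pairs. A pair survives unless it overlaps one of the `d` merged occurrences of `ab`, which
have at most three overlapping positions each, and one family is dropped: a family that lost a
pair `ab` itself, which has no surviving pair since no `ab` is left; or, if there is none, any
family, which by greediness has at most `d` pairs while only the `2 d` positions next to the
merged ones are lost. Hence `OPT s k` is at most the size of a packing, which is at most
`3 (|s| - |t|)`.
-/

variable {α : Type*} [DecidableEq α]

/-- Full greedy left-to-right replacement of the pair `ab` by `c`. -/
def replace (a b c : α) : List α → List α
  | [] => []
  | [x] => [x]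
  | x :: y :: rest =>
    if x = a ∧ y = b then c :: replace a b c rest
    else x :: replace a b c (y :: rest)

/-- Replacement of every occurrence of the symbol `c` by the pair `ab`. -/
def expand (a b c : α) : List α → List α
  | [] => []
  | x :: rest => if x = c then a :: b :: expand a b c rest else x :: expand a b c rest

/-- `t` is obtained from `s` by one partial replacement rule (replacing some
non-overlapping occurrences of a pair `ab` by a symbol `c`, invertibly). -/
def PartialStep (s t : List α) : Prop := ∃ a b c : α, expand a b c t = s

/-- `t` is obtained from `s` by one full merge of a pair `ab` into a fresh symbol `c`. -/
def FullStep (s t : List α) : Prop := ∃ a b c : α, c ∉ s ∧ t = replace a b c s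

/-- A greedy (BPE) step: a full merge minimizing the resulting length. -/
def GreedyStep (s t : List α) : Prop :=
  FullStep s t ∧ ∀ u : List α, FullStep s u → t.length ≤ u.length

/-- `t` is obtained from `s` by a partial merge sequence of length `k`. -/
def PartialReach : ℕ → List α → List α → Prop
  | 0, s, t => t = s
  | k+1, s, t => ∃ u, PartialStep s u ∧ PartialReach k u t

/-- `t` is obtained from `s` by a full merge sequence of length `k`. -/
def FullReach : ℕ → List α → List α → Prop
  | 0, s, t => t = s
  | k+1, s, t => ∃ u, FullStep s u ∧ FullReach k u t

/-- `t` is obtained from `s` by a run of BPE with `k` greedy merge rounds. -/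
def GreedyReach : ℕ → List α → List α → Prop
  | 0, s, t => t = s
  | k+1, s, t => ∃ u, GreedyStep s u ∧ GreedyReach k u t

/-- Optimal utility of partial merge sequences of length `k` (the OPE optimum). -/
noncomputable def OPT (s : List α) (k : ℕ) : ℕ :=
  sSup {u : ℕ | ∃ t : List α, PartialReach k s t ∧ u = s.length - t.length}

/-- Optimal utility of full merge sequences of length `k` (the OMS optimum). -/
noncomputable def OPTm (s : List α) (k : ℕ) : ℕ :=
  sSup {u : ℕ | ∃ t : List α, FullReach k s t ∧ u = s.length - t.length}

/-- A pair packing: non-overlapping indices at which a common pair occurs in `s`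
(0-based indices). -/
def IsPairPacking (s : List α) (P : Finset ℕ) : Prop :=
  (∀ i ∈ P, i + 1 < s.length) ∧
  (∀ i ∈ P, ∀ j ∈ P, i ≠ j → 2 ≤ Nat.dist i j) ∧
  ∃ a b : α, ∀ i ∈ P, s[i]? = some a ∧ s[i+1]? = some b

/-- A `k`-packing: a disjoint union of `k` pair packings. -/
def IsKPacking (s : List α) (k : ℕ) (P : Fin k → Finset ℕ) : Prop :=
  (∀ i, IsPairPacking s (P i)) ∧ ∀ i j, i ≠ j → Disjoint (P i) (P j)

/-- `Pk s k`: maximum size of a `k`-packing of `s`. -/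
noncomputable def Pk (s : List α) (k : ℕ) : ℕ :=
  sSup {n : ℕ | ∃ P : Fin k → Finset ℕ, IsKPacking s k P ∧ n = ∑ i, (P i).card}

/-- Number of (possibly overlapping) occurrences of the pair `ab` in `s`. -/
def freq (s : List α) (a b : α) : ℕ :=
  ((Finset.range s.length).filter (fun i => s[i]? = some a ∧ s[i+1]? = some b)).card

/-- `Fk s k`: total number of occurrences of the `k` most frequent pairs in `s`. -/
noncomputable def Fk (s : List α) (k : ℕ) : ℕ :=
  sSup {n : ℕ | ∃ Q : Finset (α × α), Q.card ≤ k ∧ n = ∑ p ∈ Q, freq s p.1 p.2}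

theorem exists_le_lt_apply_succ {f : ℕ → ℕ} {q n : ℕ} (h₀ : f 0 ≤ q) (hq : q < f n) :
    ∃ j < n, f j ≤ q ∧ q < f (j + 1) := by
  induction n with
  | zero => omega
  | succ n ih =>
    by_cases hn : q < f n
    · obtain ⟨j, hj, hfj⟩ := ih hn
      exact ⟨j, by omega, hfj⟩
    · exact ⟨n, by omega, by omega, hq⟩

theorem Finset.card_le_card_filter_lt_add_card_preimage_add (P : Finset ℕ) (n : ℕ) :
    P.card ≤
      (P.filter (· < n)).card + (P.preimage (· + n) (add_left_injective n).injOn).card := by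
  calc P.card
      ≤ (P.filter (· < n) ∪
          (P.preimage (· + n) (add_left_injective n).injOn).image (· + n)).card := by
        refine Finset.card_le_card fun i hi => ?_
        by_cases hin : i < n
        · exact Finset.mem_union_left _ (Finset.mem_filter.2 ⟨hi, hin⟩)
        · refine Finset.mem_union_right _ (Finset.mem_image.2 ⟨i - n, ?_, by omega⟩)
          rw [Finset.mem_preimage, Nat.sub_add_cancel (by omega)]
          exact hi
    _ ≤ _ := (Finset.card_union_le _ _).trans (Nat.add_le_add_left Finset.card_image_le _)

section Expand

variable (a b c : α)

theorem expand_cons (x : α) (u : List α) :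
    expand a b c (x :: u) = if x = c then a :: b :: expand a b c u else x :: expand a b c u :=
  rfl

theorem expand_append (u v : List α) :
    expand a b c (u ++ v) = expand a b c u ++ expand a b c v := by
  induction u with
  | nil => rfl
  | cons x u ih => simp only [List.cons_append, expand_cons, ih]; split <;> rfl

theorem length_expand (u : List α) : (expand a b c u).length = u.length + u.count c := by
  induction u with
  | nil => rfl
  | cons x u ih =>
    rw [expand_cons, List.count_cons]
    split <;> simp_all <;> omega

theorem expand_replace {s : List α} (h : c ∉ s) : expand a b c (replace a b c s) = s := by
  induction s using replace.induct a b with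
  | case1 => rfl
  | case2 x => simp_all [replace, expand, eq_comm]
  | case3 x y rest hxy ih =>
    simp only [List.mem_cons, not_or] at h
    simp [replace, expand, hxy.1, hxy.2, ih h.2.2]
  | case4 x y rest hxy ih =>
    simp only [List.mem_cons, not_or] at h
    simp only [replace, if_neg hxy, expand, if_neg (Ne.symm h.1), List.cons.injEq, true_and]
    exact ih (by simp [h.2.1, h.2.2])

end Expand

section Replace

variable {a b c : α}

theorem exists_replace_cons_eq (y : α) (l : List α) :
    ∃ r, replace a b c (y :: l) = y :: r ∨ replace a b c (y :: l) = c :: r := by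
  match l with
  | [] => exact ⟨[], Or.inl rfl⟩
  | z :: l =>
    rw [replace]
    split
    · exact ⟨_, Or.inr rfl⟩
    · exact ⟨_, Or.inl rfl⟩

theorem not_pair_mem_replace (ha : a ≠ c) (hb : b ≠ c) (s : List α) (j : ℕ) :
    ¬((replace a b c s)[j]? = some a ∧ (replace a b c s)[j + 1]? = some b) := by
  induction s using replace.induct a b generalizing j with
  | case1 => simp [replace]
  | case2 x => simp [replace]
  | case3 x y rest hxy ih =>
    rw [replace, if_pos hxy]
    cases j with
    | zero => simp [Ne.symm ha]
    | succ j => simpa using ih j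
  | case4 x y rest hxy ih =>
    rw [replace, if_neg hxy]
    cases j with
    | zero =>
      rintro ⟨hx, hy⟩
      obtain ⟨r, hr | hr⟩ := exists_replace_cons_eq (a := a) (b := b) (c := c) y rest <;>
        rw [hr] at hy <;> simp at hx hy
      · exact hxy ⟨hx, hy⟩
      · exact hb hy.symm
    | succ j => simpa using ih j

theorem length_replace_add_card_le (s : List α) (P : Finset ℕ)
    (hocc : ∀ i ∈ P, s[i]? = some a ∧ s[i + 1]? = some b)
    (hdist : ∀ i ∈ P, ∀ j ∈ P, i ≠ j → 2 ≤ Nat.dist i j) :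
    (replace a b c s).length + P.card ≤ s.length := by
  induction s using replace.induct a b generalizing P with
  | case1 =>
    have : P = ∅ := Finset.eq_empty_of_forall_notMem fun i hi => by simpa using hocc i hi
    simp [replace, this]
  | case2 x =>
    have : P = ∅ := Finset.eq_empty_of_forall_notMem fun i hi => by simpa using (hocc i hi).2
    simp [replace, this]
  | case3 x y rest hxy ih =>
    have hrest := ih (P.preimage (· + 2) (add_left_injective 2).injOn)
      (fun i hi => by simpa using hocc _ (Finset.mem_preimage.1 hi))
      (fun i hi j hj hij => by
        simpa [Nat.dist_add_add_right] using
          hdist _ (Finset.mem_preimage.1 hi) _ (Finset.mem_preimage.1 hj) (by omega))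
    have hhead : (P.filter (· < 2)).card ≤ 1 := Finset.card_le_one.2 fun i hi j hj => by
      simp only [Finset.mem_filter] at hi hj
      by_contra hij
      have := hdist i hi.1 j hj.1 hij
      simp only [Nat.dist] at this
      omega
    have := P.card_le_card_filter_lt_add_card_preimage_add 2
    simp only [replace, if_pos hxy, List.length_cons] at hrest ⊢
    omega
  | case4 x y rest hxy ih =>
    have hrest := ih (P.preimage (· + 1) (add_left_injective 1).injOn)
      (fun i hi => by simpa using hocc _ (Finset.mem_preimage.1 hi))
      (fun i hi j hj hij => by
        simpa [Nat.dist_add_add_right] using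
          hdist _ (Finset.mem_preimage.1 hi) _ (Finset.mem_preimage.1 hj) (by omega))
    have hhead : (P.filter (· < 1)).card = 0 := by
      refine Finset.card_eq_zero.2 (Finset.filter_eq_empty_iff.2 fun i hi hi1 => hxy ?_)
      obtain rfl : i = 0 := by omega
      simpa using hocc 0 hi
    have := P.card_le_card_filter_lt_add_card_preimage_add 1
    simp only [replace, if_neg hxy, List.length_cons] at hrest ⊢
    omega

end Replace

/-- The index in `expand a b c u` at which the image of `u[j]` starts. -/
def expandIdx (c : α) (u : List α) (j : ℕ) : ℕ := j + (u.take j).count c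

/-- The index in `expand a b c u` at which the image of `u[j]` ends. -/
def expandLastIdx (c : α) (u : List α) (j : ℕ) : ℕ := expandIdx c u (j + 1) - 1

section ExpandIdx

variable (a b c : α) (u : List α)

theorem expandIdx_strictMono : StrictMono (expandIdx c u) := by
  intro i j hij
  have := (List.take_prefix_take_left (l := u) hij.le).count_le c
  simp only [expandIdx]
  omega

theorem expandIdx_length : expandIdx c u u.length = (expand a b c u).length := by
  rw [expandIdx, List.take_length, length_expand]

variable {u}

theorem expandIdx_succ {j : ℕ} {x : α} (h : u[j]? = some x) :
    expandIdx c u (j + 1) = expandIdx c u j + if x = c then 2 else 1 := by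
  simp only [expandIdx, List.take_add_one, h, Option.toList_some, List.count_append,
    List.count_singleton, beq_iff_eq]
  split <;> omega

theorem expandLastIdx_add_one (j : ℕ) : expandLastIdx c u j + 1 = expandIdx c u (j + 1) := by
  simp only [expandLastIdx, expandIdx]
  omega

theorem expandLastIdx_strictMono : StrictMono (expandLastIdx c u) := fun i j hij => by
  have := expandIdx_strictMono c u (Nat.add_lt_add_right hij 1)
  have := expandLastIdx_add_one c (u := u) i
  have := expandLastIdx_add_one c (u := u) j
  omega

theorem getElem?_expand_expandIdx_add {j : ℕ} (hj : j ≤ u.length) (i : ℕ) :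
    (expand a b c u)[expandIdx c u j + i]? = (expand a b c (u.drop j))[i]? := by
  have hsplit : expand a b c u = expand a b c (u.take j) ++ expand a b c (u.drop j) := by
    rw [← expand_append, List.take_append_drop]
  have hlen : (expand a b c (u.take j)).length = expandIdx c u j := by
    rw [length_expand, List.length_take, min_eq_left hj, expandIdx]
  rw [hsplit, List.getElem?_append_right (by omega), hlen, Nat.add_sub_cancel_left]

theorem getElem?_expand_expandIdx_add_of_getElem? {j : ℕ} {x : α} (h : u[j]? = some x)
    (i : ℕ) :
    (expand a b c u)[expandIdx c u j + i]? =
      (expand a b c (x :: u.drop (j + 1)))[i]? := by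
  obtain ⟨hj, rfl⟩ := List.getElem?_eq_some_iff.1 h
  rw [getElem?_expand_expandIdx_add a b c hj.le, List.drop_eq_getElem_cons hj]

theorem getElem?_expand_expandIdx {j : ℕ} {x : α} (h : u[j]? = some x) :
    (expand a b c u)[expandIdx c u j]? = some (if x = c then a else x) := by
  have := getElem?_expand_expandIdx_add_of_getElem? a b c h 0
  rw [Nat.add_zero] at this
  rw [this, expand_cons]
  split <;> rfl

theorem getElem?_expand_expandIdx_add_one_of_eq {j : ℕ} (h : u[j]? = some c) :
    (expand a b c u)[expandIdx c u j + 1]? = some b := by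
  rw [getElem?_expand_expandIdx_add_of_getElem? a b c h 1, expand_cons, if_pos rfl]
  rfl

theorem getElem?_expand_expandLastIdx {j : ℕ} {x : α} (h : u[j]? = some x) :
    (expand a b c u)[expandLastIdx c u j]? = some (if x = c then b else x) := by
  have hlast := expandLastIdx_add_one c (u := u) j
  rw [expandIdx_succ c h] at hlast
  by_cases hx : x = c
  · rw [hx] at h
    rw [if_pos hx] at hlast ⊢
    rw [show expandLastIdx c u j = expandIdx c u j + 1 by omega]
    exact getElem?_expand_expandIdx_add_one_of_eq a b c h
  · rw [if_neg hx] at hlast ⊢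
    rw [show expandLastIdx c u j = expandIdx c u j by omega, getElem?_expand_expandIdx a b c h,
      if_neg hx]

end ExpandIdx

theorem StrictMono.two_le_dist {f : ℕ → ℕ} (hf : StrictMono f) {i j : ℕ}
    (h : 2 ≤ Nat.dist i j) : 2 ≤ Nat.dist (f i) (f j) := by
  wlog hij : i ≤ j generalizing i j
  · rw [Nat.dist_comm] at h ⊢
    exact this h (by omega)
  unfold Nat.dist at h ⊢
  have h₁ := hf (show i < i + 1 by omega)
  have h₂ := hf (show i + 1 < i + 2 by omega)
  have h₃ := hf.monotone (show i + 2 ≤ j by omega)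
  omega

def occIdx (c : α) (u : List α) : Finset ℕ :=
  (Finset.range u.length).filter fun j => u[j]? = some c

/-- The positions in `expand a b c u` of the pairs `ab` standing for the occurrences of `c`. -/
def mergeStarts (c : α) (u : List α) : Finset ℕ := (occIdx c u).image (expandIdx c u)

/-- The positions of the other pairs of `expand a b c u` overlapping those of `mergeStarts`. -/
def mergeBorders (c : α) (u : List α) : Finset ℕ :=
  (occIdx c u).biUnion fun j => {expandIdx c u j - 1, expandIdx c u j + 1}

section Occurrences

variable {a b c : α} {u : List α}

theorem mem_occIdx {j : ℕ} : j ∈ occIdx c u ↔ u[j]? = some c := by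
  simp only [occIdx, Finset.mem_filter, Finset.mem_range]
  exact ⟨And.right, fun h => ⟨(List.getElem?_eq_some_iff.1 h).1, h⟩⟩

theorem card_occIdx (c : α) (u : List α) : (occIdx c u).card = u.count c := by
  induction u with
  | nil => rfl
  | cons x u ih =>
    simp only [occIdx, Finset.card_filter] at ih ⊢
    rw [List.length_cons, Finset.sum_range_succ', List.count_cons]
    simp only [List.getElem?_cons_succ, List.getElem?_cons_zero, ih, Option.some.injEq,
      beq_iff_eq]

theorem card_mergeStarts : (mergeStarts c u).card = u.count c := by
  rw [mergeStarts, Finset.card_image_of_injective _ (expandIdx_strictMono c u).injective,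
    card_occIdx]

theorem card_mergeBorders_le : (mergeBorders c u).card ≤ 2 * u.count c := by
  calc (mergeBorders c u).card ≤ ∑ _j ∈ occIdx c u, 2 :=
        Finset.card_biUnion_le.trans (Finset.sum_le_sum fun _ _ => Finset.card_le_two)
    _ = 2 * u.count c := by rw [Finset.sum_const, card_occIdx, smul_eq_mul, mul_comm]

theorem isPairPacking_mergeStarts : IsPairPacking (expand a b c u) (mergeStarts c u) := by
  have hgap {j} (hj : j ∈ occIdx c u) : expandIdx c u (j + 1) = expandIdx c u j + 2 := by
    rw [expandIdx_succ c (mem_occIdx.1 hj), if_pos rfl]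
  refine ⟨?_, ?_, a, b, ?_⟩
  · simp only [mergeStarts, Finset.forall_mem_image]
    intro j hj
    have hlt : j < u.length := (Finset.mem_range.1 (Finset.mem_filter.1 hj).1)
    have := (expandIdx_strictMono c u).monotone (show j + 1 ≤ u.length by omega)
    rw [expandIdx_length a b c, hgap hj] at this
    omega
  · simp only [mergeStarts, Finset.forall_mem_image]
    intro i hi j hj hij
    wlog hlt : i < j generalizing i j
    · rw [Nat.dist_comm]
      exact this hj hi (Ne.symm hij)
        (lt_of_le_of_ne (not_lt.1 hlt) fun h => hij (h ▸ rfl))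
    have := (expandIdx_strictMono c u).monotone (show i + 1 ≤ j by omega)
    rw [hgap hi] at this
    unfold Nat.dist
    omega
  · simp only [mergeStarts, Finset.forall_mem_image]
    intro j hj
    have h := mem_occIdx.1 hj
    exact ⟨by rw [getElem?_expand_expandIdx a b c h, if_pos rfl],
      getElem?_expand_expandIdx_add_one_of_eq a b c h⟩

theorem IsPairPacking.image_expandLastIdx {p : Finset ℕ} (hp : IsPairPacking u p) :
    IsPairPacking (expand a b c u) (p.image (expandLastIdx c u)) := by
  obtain ⟨hlt, hdist, x, y, hxy⟩ := hp
  refine ⟨?_, ?_, if x = c then b else x, if y = c then a else y, ?_⟩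
  · simp only [Finset.forall_mem_image]
    intro j hj
    rw [expandLastIdx_add_one, ← expandIdx_length a b c]
    exact expandIdx_strictMono c u (hlt j hj)
  · simp only [Finset.forall_mem_image]
    intro i hi j hj hij
    exact (expandLastIdx_strictMono c).two_le_dist (hdist i hi j hj fun h => hij (h ▸ rfl))
  · simp only [Finset.forall_mem_image]
    intro j hj
    rw [expandLastIdx_add_one]
    exact ⟨getElem?_expand_expandLastIdx a b c (hxy j hj).1,
      getElem?_expand_expandIdx a b c (hxy j hj).2⟩

theorem disjoint_mergeStarts_image_expandLastIdx (p : Finset ℕ) :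
    Disjoint (mergeStarts c u) (p.image (expandLastIdx c u)) := by
  simp only [mergeStarts, Finset.disjoint_left, Finset.mem_image, not_exists, not_and]
  rintro _ ⟨i, hi, rfl⟩ j - hij
  have hc := mem_occIdx.1 hi
  have hsucc := expandIdx_succ c hc
  rw [if_pos rfl] at hsucc
  have hlast := expandLastIdx_add_one c (u := u) j
  have hj := expandIdx_strictMono c u (show j < j + 1 by omega)
  have hji : j ≤ i := by
    by_contra! h
    have := (expandIdx_strictMono c u).monotone (show i + 1 ≤ j by omega)
    omega
  have hij' : i ≤ j := by
    by_contra! h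
    have := (expandIdx_strictMono c u).monotone (show j + 1 ≤ i by omega)
    omega
  obtain rfl : i = j := le_antisymm hij' hji
  omega

end Occurrences

section PartialReach

variable {k : ℕ}

theorem IsKPacking.cons {β : Type*} {s : List β} {p : Finset ℕ} {P : Fin k → Finset ℕ}
    (hp : IsPairPacking s p) (hP : IsKPacking s k P) (hdisj : ∀ i, Disjoint p (P i)) :
    IsKPacking s (k + 1) (Fin.cons p P) := by
  refine ⟨Fin.cases hp hP.1, fun i j hij => ?_⟩
  cases i using Fin.cases <;> cases j using Fin.cases
  · exact absurd rfl hij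
  · simpa using hdisj _
  · simpa using (hdisj _).symm
  · simpa using hP.2 _ _ fun h => hij (congrArg Fin.succ h)

theorem IsKPacking.cons_mergeStarts {u : List α} {P : Fin k → Finset ℕ} (hP : IsKPacking u k P)
    (a b c : α) :
    IsKPacking (expand a b c u) (k + 1)
      (Fin.cons (mergeStarts c u) fun i => (P i).image (expandLastIdx c u)) :=
  IsKPacking.cons isPairPacking_mergeStarts
    ⟨fun i => (hP.1 i).image_expandLastIdx, fun i j hij =>
      (Finset.disjoint_image (expandLastIdx_strictMono c).injective).2 (hP.2 i j hij)⟩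
    fun _ => disjoint_mergeStarts_image_expandLastIdx _

theorem PartialReach.exists_isKPacking {s t : List α} (h : PartialReach k s t) :
    ∃ P : Fin k → Finset ℕ, IsKPacking s k P ∧
      s.length ≤ t.length + ∑ i, (P i).card := by
  induction k generalizing s with
  | zero =>
    exact ⟨Fin.elim0, ⟨fun i => i.elim0, fun i => i.elim0⟩, by simp [show t = s from h]⟩
  | succ k ih =>
    obtain ⟨u, ⟨a, b, c, rfl⟩, hu⟩ := h
    obtain ⟨P, hP, hlen⟩ := ih hu
    refine ⟨_, hP.cons_mergeStarts a b c, ?_⟩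
    simp only [Fin.sum_univ_succ, Fin.cons_zero, Fin.cons_succ, card_mergeStarts,
      Finset.card_image_of_injective _ (expandLastIdx_strictMono c).injective, length_expand]
    omega

end PartialReach

/-- The positions in `v` of the pairs of `p ⊆ expand a b c v` that involve no `c`. -/
def pullback (c : α) (v : List α) (p : Finset ℕ) : Finset ℕ :=
  (Finset.range (v.length - 1)).filter fun j =>
    expandIdx c v j ∈ p ∧ v[j]? ≠ some c ∧ v[j + 1]? ≠ some c

section Pullback

variable {a b c : α} {v : List α} {p : Finset ℕ}

theorem mem_pullback {j : ℕ} :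
    j ∈ pullback c v p ↔
      j + 1 < v.length ∧ expandIdx c v j ∈ p ∧ v[j]? ≠ some c ∧ v[j + 1]? ≠ some c := by
  simp only [pullback, Finset.mem_filter, Finset.mem_range]
  constructor <;> rintro ⟨h, rest⟩ <;> exact ⟨by omega, rest⟩

theorem expandIdx_succ_of_ne {j : ℕ} (h : v[j]? ≠ some c) :
    expandIdx c v (j + 1) = expandIdx c v j + 1 := by
  cases hj : v[j]? with
  | none => simp only [expandIdx, List.take_add_one, hj, Option.toList_none, List.append_nil]; omega
  | some x =>
    rw [expandIdx_succ c hj, if_neg fun hx => h (by rw [hj, hx])]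

theorem getElem?_expand_expandIdx_of_ne {j : ℕ} (h : v[j]? ≠ some c) :
    (expand a b c v)[expandIdx c v j]? = v[j]? := by
  cases hj : v[j]? with
  | none =>
    have hlen := List.getElem?_eq_none_iff.1 hj
    refine List.getElem?_eq_none_iff.2 ?_
    rw [← expandIdx_length a b c]
    exact (expandIdx_strictMono c v).monotone hlen
  | some x =>
    rw [getElem?_expand_expandIdx a b c hj, if_neg fun hx => h (by rw [hj, hx])]

theorem getElem?_expand_of_mem_pullback {j : ℕ} (hj : j ∈ pullback c v p) :
    (expand a b c v)[expandIdx c v j]? = v[j]? ∧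
      (expand a b c v)[expandIdx c v j + 1]? = v[j + 1]? := by
  obtain ⟨-, -, hj₀, hj₁⟩ := mem_pullback.1 hj
  rw [← expandIdx_succ_of_ne hj₀]
  exact ⟨getElem?_expand_expandIdx_of_ne hj₀, getElem?_expand_expandIdx_of_ne hj₁⟩

theorem isPairPacking_pullback (hp : IsPairPacking (expand a b c v) p) :
    IsPairPacking v (pullback c v p) := by
  obtain ⟨-, hdist, x, y, hxy⟩ := hp
  refine ⟨fun j hj => (mem_pullback.1 hj).1, fun i hi j hj hij => ?_, x, y, fun j hj => ?_⟩
  · wlog hlt : i < j generalizing i j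
    · rw [Nat.dist_comm]
      exact this _ hj _ hi (Ne.symm hij) (lt_of_le_of_ne (not_lt.1 hlt) (Ne.symm hij))
    obtain ⟨-, hi', hi₀, -⟩ := mem_pullback.1 hi
    obtain ⟨-, hj', -, -⟩ := mem_pullback.1 hj
    have hd := hdist _ hi' _ hj' ((expandIdx_strictMono c v).injective.ne hij)
    have hsucc := expandIdx_succ_of_ne hi₀
    have hj_ne : j ≠ i + 1 := by
      rintro rfl
      rw [hsucc] at hd
      simp [Nat.dist] at hd
    unfold Nat.dist
    omega
  · obtain ⟨h₀, h₁⟩ := getElem?_expand_of_mem_pullback (a := a) (b := b) hj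
    obtain ⟨hx, hy⟩ := hxy _ (mem_pullback.1 hj).2.1
    exact ⟨h₀ ▸ hx, h₁ ▸ hy⟩

theorem card_pullback_le : (pullback c v p).card ≤ p.card :=
  Finset.card_le_card_of_injOn _ (fun _ hj => (mem_pullback.1 hj).2.1)
    (expandIdx_strictMono c v).injective.injOn

theorem disjoint_pullback {q : Finset ℕ} (h : Disjoint p q) :
    Disjoint (pullback c v p) (pullback c v q) :=
  Finset.disjoint_left.2 fun _ hp hq =>
    Finset.disjoint_left.1 h (mem_pullback.1 hp).2.1 (mem_pullback.1 hq).2.1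

theorem mem_image_pullback_or {q : Finset ℕ} {i : ℕ} (hi : i ∈ q)
    (hlt : i + 1 < (expand a b c v).length) :
    i ∈ (pullback c v q).image (expandIdx c v) ∨
      i ∈ mergeStarts c v ∨ i ∈ mergeBorders c v := by
  rw [← expandIdx_length a b c] at hlt
  obtain ⟨j, hjv, hji, hij⟩ :=
    exists_le_lt_apply_succ (f := expandIdx c v) (Nat.zero_le i)
      (show i < expandIdx c v v.length by omega)
  have hv : v[j]? = some v[j] := List.getElem?_eq_getElem hjv
  by_cases hc : v[j] = c
  · rw [hc] at hv
    rw [expandIdx_succ c hv, if_pos rfl] at hij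
    have hj : j ∈ occIdx c v := mem_occIdx.2 hv
    rcases (show i = expandIdx c v j ∨ i = expandIdx c v j + 1 by omega) with rfl | rfl
    · exact Or.inr (Or.inl (Finset.mem_image_of_mem _ hj))
    · exact Or.inr (Or.inr (Finset.mem_biUnion.2 ⟨j, hj, by simp⟩))
  · have hj₀ : v[j]? ≠ some c := by rw [hv]; exact fun h => hc (Option.some_inj.1 h)
    rw [expandIdx_succ_of_ne hj₀] at hij
    obtain rfl : i = expandIdx c v j := by omega
    have hjv' : j + 1 < v.length := by
      by_contra! h
      have := (expandIdx_strictMono c v).monotone h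
      rw [expandIdx_succ_of_ne hj₀] at this
      omega
    by_cases hj₁ : v[j + 1]? = some c
    · refine Or.inr (Or.inr (Finset.mem_biUnion.2 ⟨j + 1, mem_occIdx.2 hj₁, ?_⟩))
      simp [expandIdx_succ_of_ne hj₀]
    · exact Or.inl (Finset.mem_image_of_mem _ (mem_pullback.2 ⟨hjv', hi, hj₀, hj₁⟩))

theorem card_le_card_pullback_add (hp : ∀ i ∈ p, i + 1 < (expand a b c v).length) :
    p.card ≤
      (pullback c v p).card + (p ∩ mergeStarts c v).card + (p ∩ mergeBorders c v).card := by
  calc p.card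
      ≤ ((pullback c v p).image (expandIdx c v) ∪ p ∩ mergeStarts c v ∪
          p ∩ mergeBorders c v).card := by
        refine Finset.card_le_card fun i hi => ?_
        rcases mem_image_pullback_or hi (hp i hi) with h | h | h <;> simp [h, hi]
    _ ≤ _ := by
        refine (Finset.card_union_le _ _).trans (Nat.add_le_add_right ?_ _)
        exact (Finset.card_union_le _ _).trans (Nat.add_le_add_right Finset.card_image_le _)

theorem pullback_replace_eq_empty {s : List α} (hc : c ∉ s) (hp : IsPairPacking s p)
    (hmerge : (p ∩ mergeStarts c (replace a b c s)).Nonempty) :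
    pullback c (replace a b c s) p = ∅ := by
  have hs := expand_replace a b c hc
  obtain ⟨-, -, x, y, hxy⟩ := hp
  obtain ⟨i, hi⟩ := hmerge
  obtain ⟨hip, him⟩ := Finset.mem_inter.1 hi
  obtain ⟨j, hj, rfl⟩ := Finset.mem_image.1 him
  have hja := getElem?_expand_expandIdx a b c (mem_occIdx.1 hj)
  have hjb := getElem?_expand_expandIdx_add_one_of_eq a b c (mem_occIdx.1 hj)
  rw [if_pos rfl, hs] at hja
  rw [hs] at hjb
  obtain ⟨rfl, rfl⟩ : x = a ∧ y = b := by
    obtain ⟨hx, hy⟩ := hxy _ hip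
    exact ⟨Option.some_inj.1 (hx.symm.trans hja), Option.some_inj.1 (hy.symm.trans hjb)⟩
  have hac : x ≠ c := fun h => hc (h ▸ List.mem_of_getElem? hja)
  have hbc : y ≠ c := fun h => hc (h ▸ List.mem_of_getElem? hjb)
  refine Finset.eq_empty_of_forall_notMem fun j' hj' => not_pair_mem_replace hac hbc s j' ?_
  obtain ⟨h₀, h₁⟩ := getElem?_expand_of_mem_pullback (a := x) (b := y) hj'
  rw [hs] at h₀ h₁
  obtain ⟨hx, hy⟩ := hxy _ (mem_pullback.1 hj').2.1
  exact ⟨h₀ ▸ hx, h₁ ▸ hy⟩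

end Pullback

theorem Finset.sum_card_inter_le_of_pairwise_disjoint {ι : Type*} [Fintype ι]
    {P : ι → Finset ℕ} (hP : ∀ i j, i ≠ j → Disjoint (P i) (P j)) (T : Finset ℕ) :
    ∑ i, (P i ∩ T).card ≤ T.card := by
  rw [← Finset.card_biUnion fun i _ j _ hij =>
    (hP i j hij).mono Finset.inter_subset_left Finset.inter_subset_left]
  exact Finset.card_le_card (Finset.biUnion_subset.2 fun _ _ => Finset.inter_subset_right)

section GreedyReach

variable {s u : List α}

theorem GreedyStep.card_add_length_le (hg : GreedyStep s u) {p : Finset ℕ}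
    (hp : IsPairPacking s p) : p.card + u.length ≤ s.length := by
  obtain ⟨⟨-, -, c, hc, -⟩, hmin⟩ := hg
  obtain ⟨-, hdist, x, y, hxy⟩ := hp
  have := length_replace_add_card_le (c := c) s p hxy hdist
  have := hmin _ ⟨x, y, c, hc, rfl⟩
  omega

/-- `i₀` is the packing to drop after a greedy merge. -/
theorem exists_card_pullback_add_sum_card_inter_mergeStarts_le {a b c : α} {s : List α}
    (hc : c ∉ s) {k : ℕ} {P : Fin (k + 1) → Finset ℕ} (hP : IsKPacking s (k + 1) P)
    (hcost : ∀ i, (P i).card + (replace a b c s).length ≤ s.length) :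
    ∃ i₀, (pullback c (replace a b c s) (P i₀)).card +
      ∑ i, (P i ∩ mergeStarts c (replace a b c s)).card ≤ (replace a b c s).count c := by
  by_cases hmerge : ∃ i, (P i ∩ mergeStarts c (replace a b c s)).Nonempty
  · obtain ⟨i₀, hi₀⟩ := hmerge
    refine ⟨i₀, ?_⟩
    rw [pullback_replace_eq_empty hc (hP.1 i₀) hi₀, Finset.card_empty, zero_add,
      ← card_mergeStarts (c := c) (u := replace a b c s)]
    exact Finset.sum_card_inter_le_of_pairwise_disjoint hP.2 _
  · push Not at hmerge
    refine ⟨0, ?_⟩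
    simp only [hmerge, Finset.card_empty, Finset.sum_const_zero, add_zero]
    have hlen := length_expand a b c (replace a b c s)
    rw [expand_replace a b c hc] at hlen
    have := hcost 0
    have := card_pullback_le (c := c) (v := replace a b c s) (p := P 0)
    omega

theorem GreedyStep.exists_isKPacking (hg : GreedyStep s u) {k : ℕ}
    {P : Fin (k + 1) → Finset ℕ} (hP : IsKPacking s (k + 1) P) :
    ∃ Q : Fin k → Finset ℕ, IsKPacking u k Q ∧
      ∑ i, (P i).card + 3 * u.length ≤ ∑ i, (Q i).card + 3 * s.length := by
  have hcost : ∀ i, (P i).card + u.length ≤ s.length := fun i => hg.card_add_length_le (hP.1 i)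
  obtain ⟨⟨a, b, c, hc, rfl⟩, -⟩ := hg
  obtain ⟨i₀, hi₀⟩ := exists_card_pullback_add_sum_card_inter_mergeStarts_le hc hP hcost
  set v := replace a b c s
  have hs : expand a b c v = s := expand_replace a b c hc
  have hlen : s.length = v.length + v.count c := by rw [← hs, length_expand]
  have hP' : IsKPacking (expand a b c v) (k + 1) P := hs ▸ hP
  refine ⟨fun i => pullback c v (P (i₀.succAbove i)),
    ⟨fun i => isPairPacking_pullback (hP'.1 _), fun i j hij =>
      disjoint_pullback (hP.2 _ _ (Fin.succAbove_right_injective.ne hij))⟩, ?_⟩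
  have hlost : ∑ i, (P i).card ≤ ∑ i, (pullback c v (P i)).card +
      ∑ i, (P i ∩ mergeStarts c v).card + ∑ i, (P i ∩ mergeBorders c v).card := by
    simp only [← Finset.sum_add_distrib]
    exact Finset.sum_le_sum fun i _ => card_le_card_pullback_add (hP'.1 i).1
  have hborders := (Finset.sum_card_inter_le_of_pairwise_disjoint hP.2 (mergeBorders c v)).trans
    card_mergeBorders_le
  have hdrop := Fin.sum_univ_succAbove (fun i => (pullback c v (P i)).card) i₀
  change _ ≤ ∑ i, (pullback c v (P (i₀.succAbove i))).card + _
  omega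

end GreedyReach

theorem GreedyReach.sum_card_add_le {k : ℕ} {s t : List α} (h : GreedyReach k s t)
    {P : Fin k → Finset ℕ} (hP : IsKPacking s k P) :
    ∑ i, (P i).card + 3 * t.length ≤ 3 * s.length := by
  induction k generalizing s with
  | zero => simp [show t = s from h]
  | succ k ih =>
    obtain ⟨u, hu, hut⟩ := h
    obtain ⟨Q, hQ, hPQ⟩ := hu.exists_isKPacking hP
    have := ih hut hQ
    omega

/-- BPE is a `1/3`-approximation for OPE: any run of BPE with `k`
rounds has utility at least `OPT(s,k)/3`. -/
theorem stmt7 {α : Type*} [DecidableEq α] (s t : List α) (k : ℕ)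
    (h : GreedyReach k s t) :
    OPT s k ≤ 3 * (s.length - t.length) := by
  refine csSup_le' ?_
  rintro _ ⟨t', ht', rfl⟩
  obtain ⟨P, hP, hlen⟩ := ht'.exists_isKPacking
  have := h.sum_card_add_le hP
  omega
end

section
/- BPE is Ω(n)-far from optimal for compressed length: for every t > 2, consider the string s = (∏_{i=1}^t x_i a a y_i) · (∏_{i=1}^t |_i x_i a) · (∏_{i=1}^t |'_i a y_i) over an alphabet with symbol a, distinct symbols x_1,…,x_t, y_1,…,y_t, and 2t distinct separator symbols; then |s| = 10t, and with k = 8t − 1 merge rounds, an optimal full merge sequence compresses s to a string of length 1, while every run of BPE (which necessarily merges the pair aa first) produces a compressed string of length at least t + 2. -/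
variable {α : Type*} [DecidableEq α]

/-- The string `(∏ᵢ xᵢ a a yᵢ)(∏ᵢ |ᵢ xᵢ a)(∏ᵢ |'ᵢ a yᵢ)` over ℕ, with `a = 0`,
`xᵢ = 1 + i`, `yᵢ = 1 + t + i`, and separators `1 + 2t + i`, `1 + 3t + i`. -/
def sLB (t : ℕ) : List ℕ :=
  (List.range t).flatMap (fun i => [1 + i, 0, 0, 1 + t + i]) ++
  (List.range t).flatMap (fun i => [1 + 2 * t + i, 1 + i, 0]) ++
  (List.range t).flatMap (fun i => [1 + 3 * t + i, 0, 1 + t + i])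

/-!
In `sLB t` the pair `aa` occurs `t` times, while every other symbol, hence every other pair,
occurs at most twice; so BPE's first merge is forced to be `aa`, giving a string of length `9t`
in which no adjacent pair repeats. Merging into a fresh symbol never creates a repeated pair, so
each of the remaining `8t - 2` rounds saves at most one symbol and at least `t + 2` symbols remain.
An optimal sequence instead merges `xᵢ a` and then `a yᵢ` for every `i`; each of these `2t` pairs
occurs twice, leaving `6t` symbols, which `6t - 1` further merges glue into one.
-/

section PairCount

variable {p q : α}

def pairCount (p q : α) : List α → ℕ
  | x :: y :: rest => (if x = p ∧ y = q then 1 else 0) + pairCount p q (y :: rest)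
  | _ => 0

@[simp] lemma pairCount_nil : pairCount p q [] = 0 := rfl

lemma pairCount_cons (x : α) (l : List α) :
    pairCount p q (x :: l) = (if x = p ∧ l.head? = some q then 1 else 0) + pairCount p q l := by
  cases l <;> simp [pairCount]

lemma pairCount_append (l₁ l₂ : List α) :
    pairCount p q (l₁ ++ l₂) = pairCount p q l₁ + pairCount p q l₂ +
      if l₁.getLast? = some p ∧ l₂.head? = some q then 1 else 0 := by
  induction l₁ with
  | nil => simp
  | cons x l ih =>
    cases l with
    | nil => simp [pairCount_cons, pairCount, add_comm]
    | cons y l =>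
      rw [List.cons_append, pairCount_cons, ih, pairCount_cons x, List.cons_append,
        List.getLast?_cons_cons]
      simp only [List.head?_cons, Option.some.injEq]
      omega

lemma pairCount_le_count_left (l : List α) : pairCount p q l ≤ l.count p := by
  induction l with
  | nil => simp
  | cons x l ih =>
    rw [pairCount_cons, List.count_cons, add_comm]
    exact Nat.add_le_add ih (by split_ifs <;> simp_all)

lemma pairCount_cons_le_count_right (x : α) (l : List α) :
    pairCount p q (x :: l) ≤ l.count q := by
  induction l generalizing x with
  | nil => simp [pairCount]
  | cons y l ih =>
    rw [pairCount_cons, List.count_cons, add_comm]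
    exact Nat.add_le_add (ih y) (by split_ifs <;> simp_all)

lemma pairCount_le_count_right (l : List α) : pairCount p q l ≤ l.count q := by
  cases l with
  | nil => simp
  | cons x l => exact (pairCount_cons_le_count_right x l).trans List.count_le_count_cons

end PairCount

section Replace

variable {a b c : α}

lemma replace_cons_cons (x y : α) (l : List α) :
    replace a b c (x :: y :: l) =
      if x = a ∧ y = b then c :: replace a b c l else x :: replace a b c (y :: l) := rfl

lemma length_replace_le (l : List α) : (replace a b c l).length ≤ l.length := by
  induction l using replace.induct a b with
  | case1 | case2 => simp [replace]
  | case3 x y l h ih =>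
    simp only [h, replace_cons_cons, and_self, if_true, List.length_cons]
    omega
  | case4 x y l h ih => simp only [replace_cons_cons, h, if_false, List.length_cons] at ih ⊢; omega

lemma length_le_length_replace_add_pairCount (l : List α) :
    l.length ≤ (replace a b c l).length + pairCount a b l := by
  induction l using replace.induct a b with
  | case1 | case2 => simp [replace, pairCount]
  | case3 x y l h ih =>
    obtain ⟨rfl, rfl⟩ := h
    have := pairCount_cons (p := x) (q := y) y l
    simp only [replace_cons_cons, pairCount, and_self, if_true, List.length_cons] at ih ⊢
    omega
  | case4 x y l h ih =>
    simp only [replace_cons_cons, h, pairCount, if_false, List.length_cons] at ih ⊢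
    omega

lemma replace_eq_self_of_notMem_left {l : List α} (h : a ∉ l) : replace a b c l = l := by
  induction l using replace.induct a b with
  | case1 | case2 => rfl
  | case3 x y l h' => simp [h'.1] at h
  | case4 x y l h' ih => rw [replace_cons_cons, if_neg h', ih (by simp_all)]

lemma replace_eq_self_of_notMem_right {l : List α} (h : b ∉ l) : replace a b c l = l := by
  induction l using replace.induct a b with
  | case1 | case2 => rfl
  | case3 x y l h' => simp [h'.2] at h
  | case4 x y l h' ih => rw [replace_cons_cons, if_neg h', ih (by simp_all)]

lemma replace_eq_self_or_exists (l : List α) :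
    replace a b c l = l ∨
      ∃ u v, l = u ++ a :: b :: v ∧ replace a b c l = u ++ c :: replace a b c v := by
  induction l using replace.induct a b with
  | case1 | case2 => exact Or.inl rfl
  | case3 x y l h =>
    obtain ⟨rfl, rfl⟩ := h
    exact Or.inr ⟨[], l, rfl, by simp [replace_cons_cons]⟩
  | case4 x y l h ih =>
    rw [replace_cons_cons, if_neg h]
    rcases ih with ih | ⟨u, v, hl, hr⟩
    · exact Or.inl (by rw [ih])
    · exact Or.inr ⟨x :: u, v, by rw [hl]; rfl, by rw [hr]; rfl⟩

lemma replace_append {l₁ l₂ : List α} (h : l₂.head? ≠ some b) :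
    replace a b c (l₁ ++ l₂) = replace a b c l₁ ++ replace a b c l₂ := by
  induction l₁ using replace.induct a b with
  | case1 => rfl
  | case2 x =>
    cases l₂ with
    | nil => rfl
    | cons y l₂ =>
      have hy : y ≠ b := by simpa using h
      simp [replace_cons_cons, hy, replace]
  | case3 x y l h' ih => simp [replace_cons_cons, h', ih]
  | case4 x y l h' ih => simp only [List.cons_append, replace_cons_cons, if_neg h', ← ih]

lemma head?_flatMap_ne {β γ : Type*} {f : β → List γ} {l : List β} {b : γ}
    (h : ∀ x ∈ l, (f x).head? ≠ some b) : (l.flatMap f).head? ≠ some b := by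
  rw [List.head?_flatMap]
  intro hb
  obtain ⟨y, hy, hfy⟩ := List.exists_of_findSome?_eq_some hb
  exact h y hy hfy

lemma replace_flatMap {β : Type*} {f : β → List α} {l : List β}
    (h : ∀ x ∈ l, (f x).head? ≠ some b) :
    replace a b c (l.flatMap f) = l.flatMap (fun x => replace a b c (f x)) := by
  induction l with
  | nil => rfl
  | cons x l ih =>
    rw [List.flatMap_cons, List.flatMap_cons,
      replace_append (head?_flatMap_ne fun y hy => h y (List.mem_cons_of_mem x hy)),
      ih fun y hy => h y (List.mem_cons_of_mem x hy)]

end Replace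

section Merges

variable {a b c : α}

lemma replace_eq_self_of_pairCount_eq_zero {l : List α} (h : pairCount a b l = 0) :
    replace a b c l = l := by
  obtain hl | ⟨u, v, rfl, -⟩ := replace_eq_self_or_exists (a := a) (b := b) (c := c) l
  · exact hl
  · simp [pairCount_append, pairCount] at h

def NoRepeatedPairs (l : List α) : Prop := ∀ p q : α, pairCount p q l ≤ 1

lemma pairCount_append_cons_le {p q : α} (u v : List α) (hp : p ≠ c) (hq : q ≠ c) :
    pairCount p q (u ++ c :: v) ≤ pairCount p q (u ++ a :: b :: v) := by
  have := pairCount_cons (p := p) (q := q) b v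
  simp only [pairCount_append, pairCount_cons, List.head?_cons, Option.some.injEq,
    Ne.symm hp, Ne.symm hq, false_and, and_false, if_false]
  omega

lemma count_append_cons_self {u v : List α} (hu : c ∉ u) (hv : c ∉ v) :
    (u ++ c :: v).count c = 1 := by
  simp [List.count_eq_zero.2 hu, List.count_eq_zero.2 hv]

lemma noRepeatedPairs_replace {l : List α} (h : NoRepeatedPairs l) (hc : c ∉ l) :
    NoRepeatedPairs (replace a b c l) := by
  obtain hl | ⟨u, v, rfl, hr⟩ := replace_eq_self_or_exists (a := a) (b := b) (c := c) l
  · rwa [hl]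
  have hv : replace a b c v = v := by
    refine replace_eq_self_of_pairCount_eq_zero ?_
    have := h a b
    simp only [pairCount_append, pairCount_cons, List.head?_cons, and_self, if_true] at this
    omega
  have hu : c ∉ u := fun hm => hc (List.mem_append_left _ hm)
  have hv' : c ∉ v := fun hm => hc (by simp [hm])
  intro p q
  rw [hr, hv]
  by_cases hp : p = c
  · subst hp
    exact (pairCount_le_count_left _).trans (count_append_cons_self hu hv').le
  by_cases hq : q = c
  · subst hq
    exact (pairCount_le_count_right _).trans (count_append_cons_self hu hv').le
  exact (pairCount_append_cons_le u v hp hq).trans (h p q)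

lemma length_le_length_replace_add_one {l : List α} (h : NoRepeatedPairs l) :
    l.length ≤ (replace a b c l).length + 1 :=
  (length_le_length_replace_add_pairCount l).trans (Nat.add_le_add_left (h a b) _)

lemma NoRepeatedPairs.length_le_of_fullReach {k : ℕ} {s u : List α} (h : NoRepeatedPairs s)
    (hr : FullReach k s u) : s.length ≤ u.length + k := by
  induction k generalizing s with
  | zero => rw [hr]; omega
  | succ k ih =>
    obtain ⟨w, ⟨a, b, c, hc, rfl⟩, hw⟩ := hr
    have := ih (noRepeatedPairs_replace h hc) hw
    have := length_le_length_replace_add_one (a := a) (b := b) (c := c) h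
    omega

lemma FullReach.trans {m n : ℕ} {s u v : List α} (h₁ : FullReach m s u)
    (h₂ : FullReach n u v) : FullReach (m + n) s v := by
  induction m generalizing s with
  | zero =>
    obtain rfl : u = s := h₁
    rwa [Nat.zero_add]
  | succ m ih =>
    obtain ⟨w, hs, hw⟩ := h₁
    rw [Nat.add_right_comm]
    exact ⟨w, hs, ih hw⟩

lemma GreedyReach.fullReach {k : ℕ} {s u : List α} (h : GreedyReach k s u) : FullReach k s u := by
  induction k generalizing s with
  | zero => exact h
  | succ k ih =>
    obtain ⟨w, hs, hw⟩ := h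
    exact ⟨w, hs.1, ih hw⟩

lemma List.exists_notMem_of_infinite [Infinite α] (l : List α) : ∃ c, c ∉ l := by
  obtain ⟨c, hc⟩ := Infinite.exists_notMem_finset l.toFinset
  exact ⟨c, by simpa using hc⟩

-- Merging the first two symbols saves at least one symbol; once the string is short enough,
-- the remaining rounds merge a pair of a fresh symbol, which changes nothing.
lemma exists_fullReach_length_one [Infinite α] (k : ℕ) {s : List α} (hs : s ≠ [])
    (hk : s.length ≤ k + 1) : ∃ u, FullReach k s u ∧ u.length = 1 := by
  induction k generalizing s with
  | zero => exact ⟨s, rfl, by have := List.length_pos_iff.2 hs; omega⟩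
  | succ k ih =>
    obtain ⟨c, hc⟩ := s.exists_notMem_of_infinite
    by_cases hshort : s.length ≤ k + 1
    · obtain ⟨u, hu, hu1⟩ := ih hs hshort
      exact ⟨u, ⟨s, ⟨c, c, c, hc, (replace_eq_self_of_notMem_left hc).symm⟩, hu⟩, hu1⟩
    rcases s with _ | ⟨x, _ | ⟨y, l⟩⟩
    · exact absurd rfl hs
    · simp at hshort
    have hmerge : replace x y c (x :: y :: l) = c :: replace x y c l := by
      simp [replace_cons_cons]
    obtain ⟨u, hu, hu1⟩ := ih (s := c :: replace x y c l) (List.cons_ne_nil _ _) (by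
      have := length_replace_le (a := x) (b := y) (c := c) l
      simp only [List.length_cons] at hk ⊢
      omega)
    exact ⟨u, ⟨_, ⟨x, y, c, hc, hmerge.symm⟩, hu⟩, hu1⟩

end Merges

section Ranges

lemma length_flatMap_range_of_forall {β : Type*} {f : ℕ → List β} {n k : ℕ}
    (h : ∀ i < n, (f i).length = k) : ((List.range n).flatMap f).length = n * k := by
  rw [List.length_flatMap, List.map_congr_left (fun i hi => h i (List.mem_range.1 hi))]
  simp


lemma sum_range_ite_of_unique {C : ℕ → Prop} [DecidablePred C] {n k : ℕ}
    (h : ∀ i, C i → i = k) :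
    ((List.range n).map fun i => if C i then 1 else 0).sum = if k < n ∧ C k then 1 else 0 := by
  induction n with
  | zero => simp
  | succ n ih =>
    rw [List.range_succ, List.map_append, List.sum_append, ih]
    by_cases hn : C n
    · obtain rfl := h n hn
      simp [hn]
    · have hk : (k < n ∧ C k) ↔ (k < n + 1 ∧ C k) :=
        ⟨fun ⟨hk, hc⟩ => ⟨by omega, hc⟩,
          fun ⟨hk, hc⟩ => ⟨lt_of_le_of_ne (by omega) (by rintro rfl; exact hn hc), hc⟩⟩
      simp [hn, hk]

lemma getLast?_flatMap_range {β : Type*} {f : ℕ → List β} (hf : ∀ i, f i ≠ []) {n : ℕ}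
    (hn : 0 < n) : ((List.range n).flatMap f).getLast? = (f (n - 1)).getLast? := by
  obtain ⟨n, rfl⟩ : ∃ m, n = m + 1 := ⟨n - 1, by omega⟩
  rw [List.range_succ, List.flatMap_append, List.getLast?_append]
  cases h : (f n).getLast? with
  | none => exact absurd (List.getLast?_eq_none_iff.1 h) (hf n)
  | some x => simp [h]

lemma head?_flatMap_range {β : Type*} {f : ℕ → List β} (hf : ∀ i, f i ≠ []) {n : ℕ}
    (hn : 0 < n) : ((List.range n).flatMap f).head? = (f 0).head? := by
  obtain ⟨n, rfl⟩ : ∃ m, n = m + 1 := ⟨n - 1, by omega⟩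
  rw [List.range_succ_eq_map, List.flatMap_cons, List.head?_append]
  cases h : (f 0).head? with
  | none => exact absurd (List.head?_eq_none_iff.1 h) (hf 0)
  | some x => simp

variable {p q : α}

lemma pairCount_flatMap_range {f : ℕ → List α} (hf : ∀ i, f i ≠ []) (n : ℕ) :
    pairCount p q ((List.range n).flatMap f) = ((List.range n).map fun i => pairCount p q (f i) +
      if 0 < i ∧ (f (i - 1)).getLast? = some p ∧ (f i).head? = some q then 1 else 0).sum := by
  induction n with
  | zero => simp
  | succ n ih =>
    rw [List.range_succ, List.flatMap_append, pairCount_append, ih, List.map_append,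
      List.sum_append]
    rcases Nat.eq_zero_or_pos n with rfl | hn
    · simp
    · simp [getLast?_flatMap_range hf hn, hn]
      omega

end Ranges

section SLB

lemma length_sLB (t : ℕ) : (sLB t).length = 10 * t := by
  simp only [sLB, List.length_append, List.length_flatMap, List.length_cons, List.length_nil,
    List.map_const', List.length_range, List.sum_replicate, smul_eq_mul]
  ring

lemma zero_mem_sLB {t : ℕ} (ht : 0 < t) : 0 ∈ sLB t := by
  simp only [sLB, List.mem_append, List.mem_flatMap, List.mem_range]
  exact Or.inl (Or.inl ⟨0, ht, by simp⟩)

lemma count_sLB_le_two {t z : ℕ} (hz : z ≠ 0) : (sLB t).count z ≤ 2 := by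
  simp only [sLB, List.count_append, List.count_flatMap]
  simp only [Function.comp_def, List.count_cons, List.count_nil, beq_iff_eq, Ne.symm hz, if_false,
    zero_add, add_zero, List.sum_map_add]
  rw [sum_range_ite_of_unique (k := z - t - 1) (fun i hi => by omega),
    sum_range_ite_of_unique (k := z - 1) (fun i hi => by omega),
    sum_range_ite_of_unique (k := z - 2 * t - 1) (fun i hi => by omega),
    sum_range_ite_of_unique (k := z - 3 * t - 1) (fun i hi => by omega)]
  split_ifs <;> omega

lemma pairCount_sLB_le_two {t p q : ℕ} (h : ¬(p = 0 ∧ q = 0)) : pairCount p q (sLB t) ≤ 2 := by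
  by_cases hp : p = 0
  · exact (pairCount_le_count_right _).trans (count_sLB_le_two fun hq => h ⟨hp, hq⟩)
  · exact (pairCount_le_count_left _).trans (count_sLB_le_two hp)

end SLB

section Optimal

-- Block `i` of each of the three runs of `sLB t` at merge stage `0`, `1` or `2` (last argument):
-- stage `1` has `xᵢ a` merged into `Xᵢ = 1 + 4t + i`, stage `2` also `a yᵢ` into `Yᵢ = 1 + 5t + i`.
def blockA (t i : ℕ) : ℕ → List ℕ
  | 0 => [1 + i, 0, 0, 1 + t + i]
  | 1 => [1 + 4 * t + i, 0, 1 + t + i]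
  | _ => [1 + 4 * t + i, 1 + 5 * t + i]

def blockB (t i : ℕ) : ℕ → List ℕ
  | 0 => [1 + 2 * t + i, 1 + i, 0]
  | _ => [1 + 2 * t + i, 1 + 4 * t + i]

def blockC (t i : ℕ) : ℕ → List ℕ
  | 0 | 1 => [1 + 3 * t + i, 0, 1 + t + i]
  | _ => [1 + 3 * t + i, 1 + 5 * t + i]

def mergeStage (t : ℕ) (m : ℕ → ℕ) : List ℕ :=
  (List.range t).flatMap (fun i => blockA t i (m i)) ++
  (List.range t).flatMap (fun i => blockB t i (m i)) ++
  (List.range t).flatMap (fun i => blockC t i (m i))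

lemma mergeStage_zero (t : ℕ) : mergeStage t (fun _ => 0) = sLB t := rfl

lemma length_mergeStage {t : ℕ} {m : ℕ → ℕ} (h : ∀ i < t, m i = 2) :
    (mergeStage t m).length = 6 * t := by
  simp only [mergeStage, List.length_append]
  rw [length_flatMap_range_of_forall (k := 2) (fun i hi => by rw [h i hi]; rfl),
    length_flatMap_range_of_forall (k := 2) (fun i hi => by rw [h i hi]; rfl),
    length_flatMap_range_of_forall (k := 2) (fun i hi => by rw [h i hi]; rfl)]
  ring

variable {t j : ℕ} {m : ℕ → ℕ}

lemma replace_mergeStage {a b c : ℕ} (hb : b = 0 ∨ t < b ∧ b ≤ 2 * t) :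
    replace a b c (mergeStage t m) =
      (List.range t).flatMap (fun i => replace a b c (blockA t i (m i))) ++
      (List.range t).flatMap (fun i => replace a b c (blockB t i (m i))) ++
      (List.range t).flatMap (fun i => replace a b c (blockC t i (m i))) := by
  have hA : ∀ i ∈ List.range t, (blockA t i (m i)).head? ≠ some b := by
    intro i hi; rw [List.mem_range] at hi; rcases m i with _ | _ | s <;> simp [blockA] <;> omega
  have hB : ∀ i ∈ List.range t, (blockB t i (m i)).head? ≠ some b := by
    intro i _; rcases m i with _ | s <;> simp [blockB] <;> omega
  have hC : ∀ i ∈ List.range t, (blockC t i (m i)).head? ≠ some b := by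
    intro i _; rcases m i with _ | _ | s <;> simp [blockC] <;> omega
  rw [mergeStage, replace_append (head?_flatMap_ne hC), replace_append (head?_flatMap_ne hB),
    replace_flatMap hA, replace_flatMap hB, replace_flatMap hC]

lemma replace_mergeStage_of_eq_zero (hj : j < t) (hm : m j = 0) :
    replace (1 + j) 0 (1 + 4 * t + j) (mergeStage t m) = mergeStage t (Function.update m j 1) := by
  rw [replace_mergeStage (Or.inl rfl), mergeStage]
  congr 1
  congr 1
  all_goals
    refine List.flatMap_congr fun i hi => ?_
    rw [List.mem_range] at hi
    rcases eq_or_ne i j with rfl | hij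
    · simp [hm, blockA, blockB, blockC, replace_cons_cons, replace] <;> omega
    · rw [Function.update_of_ne hij]
      refine replace_eq_self_of_notMem_left ?_
      rcases m i with _ | _ | s <;> simp [blockA, blockB, blockC] <;> omega

lemma replace_mergeStage_of_eq_one (hj : j < t) (hm : m j = 1) :
    replace 0 (1 + t + j) (1 + 5 * t + j) (mergeStage t m) =
      mergeStage t (Function.update m j 2) := by
  rw [replace_mergeStage (Or.inr (by omega)), mergeStage]
  congr 1
  congr 1
  all_goals
    refine List.flatMap_congr fun i hi => ?_
    rw [List.mem_range] at hi
    rcases eq_or_ne i j with rfl | hij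
    · simp [hm, blockA, blockB, blockC, replace_cons_cons, replace]
    · rw [Function.update_of_ne hij]
      refine replace_eq_self_of_notMem_right ?_
      rcases m i with _ | _ | s <;> simp [blockA, blockB, blockC] <;> omega

lemma exists_of_mem_mergeStage {z : ℕ} (h : z ∈ mergeStage t m) :
    ∃ i < t, z ≤ 4 * t ∨ (z = 1 + 4 * t + i ∧ m i ≠ 0) ∨ (z = 1 + 5 * t + i ∧ 2 ≤ m i) := by
  simp only [mergeStage, List.mem_append, List.mem_flatMap, List.mem_range] at h
  obtain ((⟨i, hi, h⟩ | ⟨i, hi, h⟩) | ⟨i, hi, h⟩) := h <;> refine ⟨i, hi, ?_⟩ <;>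
    rcases hs : m i with _ | _ | s <;> simp [hs, blockA, blockB, blockC] at h ⊢ <;> omega

lemma notMem_mergeStage_of_eq_zero (hj : j < t) (hm : m j = 0) :
    1 + 4 * t + j ∉ mergeStage t m := by
  intro h
  obtain ⟨i, hi, h⟩ := exists_of_mem_mergeStage h
  rcases eq_or_ne i j with rfl | hij
  · rw [hm] at h; omega
  · omega

lemma notMem_mergeStage_of_eq_one (hj : j < t) (hm : m j = 1) :
    1 + 5 * t + j ∉ mergeStage t m := by
  intro h
  obtain ⟨i, hi, h⟩ := exists_of_mem_mergeStage h
  rcases eq_or_ne i j with rfl | hij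
  · rw [hm] at h; omega
  · omega

lemma fullReach_mergeStage (hj : j ≤ t) :
    FullReach (2 * j) (sLB t) (mergeStage t fun i => if i < j then 2 else 0) := by
  induction j with
  | zero => simp [FullReach, mergeStage_zero]
  | succ j ih =>
    set m : ℕ → ℕ := fun i => if i < j then 2 else 0
    have hm : m j = 0 := by simp [m]
    have hm' : Function.update m j 1 j = 1 := Function.update_self ..
    have hupdate :
        Function.update (Function.update m j 1) j 2 = fun i => if i < j + 1 then 2 else 0 := by
      funext i
      simp only [Function.update_apply, m]
      split_ifs <;> omega
    have htwo : FullReach 2 (mergeStage t m) (mergeStage t fun i => if i < j + 1 then 2 else 0) :=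
      ⟨_, ⟨1 + j, 0, 1 + 4 * t + j, notMem_mergeStage_of_eq_zero hj hm,
          (replace_mergeStage_of_eq_zero hj hm).symm⟩,
        _, ⟨0, 1 + t + j, 1 + 5 * t + j, notMem_mergeStage_of_eq_one hj hm',
          (replace_mergeStage_of_eq_one hj hm').symm⟩, by rw [hupdate]; rfl⟩
    exact (ih (by omega)).trans htwo

lemma exists_fullReach_sLB_length_one {t : ℕ} (ht : 0 < t) :
    ∃ u, FullReach (8 * t - 1) (sLB t) u ∧ u.length = 1 := by
  set s := mergeStage t fun i => if i < t then 2 else 0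
  have hlen : s.length = 6 * t := length_mergeStage fun i hi => if_pos hi
  obtain ⟨u, hu, hu1⟩ := exists_fullReach_length_one (6 * t - 1)
    (List.ne_nil_of_length_pos (by omega : 0 < s.length)) (by omega)
  refine ⟨u, ?_, hu1⟩
  have := (fullReach_mergeStage le_rfl).trans hu
  rwa [show 2 * t + (6 * t - 1) = 8 * t - 1 by omega] at this

end Optimal

section BPE

def mergeAA (t c : ℕ) : List ℕ :=
  (List.range t).flatMap (fun i => [1 + i, c, 1 + t + i]) ++
  (List.range t).flatMap (fun i => [1 + 2 * t + i, 1 + i, 0]) ++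
  (List.range t).flatMap (fun i => [1 + 3 * t + i, 0, 1 + t + i])

lemma length_mergeAA (t c : ℕ) : (mergeAA t c).length = 9 * t := by
  simp only [mergeAA, List.length_append, List.length_flatMap, List.length_cons, List.length_nil,
    List.map_const', List.length_range, List.sum_replicate, smul_eq_mul]
  ring

lemma replace_zero_zero_sLB (t c : ℕ) : replace 0 0 c (sLB t) = mergeAA t c := by
  rw [← mergeStage_zero, replace_mergeStage (Or.inl rfl), mergeAA]
  simp [blockA, blockB, blockC, replace]

lemma noRepeatedPairs_mergeAA {t c : ℕ} (ht : 0 < t) (hc : c ≠ 0) :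
    NoRepeatedPairs (mergeAA t c) := by
  intro p q
  simp only [mergeAA, pairCount_append, pairCount_flatMap_range (fun i => List.cons_ne_nil _ _),
    List.sum_map_add, List.getLast?_append, head?_flatMap_range (fun i => List.cons_ne_nil _ _) ht,
    getLast?_flatMap_range (fun i => List.cons_ne_nil _ _) ht]
  simp only [pairCount, add_zero, List.sum_map_add, List.getLast?_cons_cons,
    List.getLast?_singleton, Option.some.injEq, List.head?_cons, Option.or_some, Option.getD_some]
  rw [sum_range_ite_of_unique (k := p - 1) (fun i hi => by omega),
    sum_range_ite_of_unique (k := q - t - 1) (fun i hi => by omega),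
    sum_range_ite_of_unique (k := q - 1) (fun i hi => by omega),
    sum_range_ite_of_unique (k := p - 2 * t - 1) (fun i hi => by omega),
    sum_range_ite_of_unique (k := p - 1) (fun i hi => by omega),
    sum_range_ite_of_unique (k := q - 2 * t - 1) (fun i hi => by omega),
    sum_range_ite_of_unique (k := p - 3 * t - 1) (fun i hi => by omega),
    sum_range_ite_of_unique (k := q - t - 1) (fun i hi => by omega),
    sum_range_ite_of_unique (k := q - 3 * t - 1) (fun i hi => by omega)]
  -- each summand counts one kind of adjacent pair, which pins down `(p, q)`; fixing the range of
  -- `p` rules out all but a few of them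
  rcases (by omega : p = 0 ∨ (0 < p ∧ p ≤ t) ∨ (t < p ∧ p ≤ 2 * t) ∨ (2 * t < p ∧ p ≤ 3 * t) ∨
    3 * t < p) with hp | hp | hp | hp | hp <;>
  simp (disch := omega) only [if_neg, Nat.add_zero, Nat.zero_add] <;> split_ifs <;> omega

lemma greedyStep_sLB {t : ℕ} (ht : 2 < t) {u : List ℕ} (h : GreedyStep (sLB t) u) :
    u.length = 9 * t ∧ NoRepeatedPairs u := by
  obtain ⟨⟨a, b, c, hc, rfl⟩, hmin⟩ := h
  obtain ⟨c₀, hc₀⟩ := (sLB t).exists_notMem_of_infinite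
  have hle : (replace a b c (sLB t)).length ≤ 9 * t := by
    simpa [replace_zero_zero_sLB, length_mergeAA] using hmin _ ⟨0, 0, c₀, hc₀, rfl⟩
  obtain ⟨rfl, rfl⟩ : a = 0 ∧ b = 0 := by
    by_contra hab
    have := length_le_length_replace_add_pairCount (a := a) (b := b) (c := c) (sLB t)
    have := pairCount_sLB_le_two (t := t) hab
    rw [length_sLB] at *
    omega
  rw [replace_zero_zero_sLB]
  refine ⟨length_mergeAA t c, noRepeatedPairs_mergeAA (by omega) ?_⟩
  rintro rfl
  exact hc (zero_mem_sLB (by omega))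

lemma le_length_of_greedyReach_sLB {t : ℕ} (ht : 2 < t) {u : List ℕ}
    (h : GreedyReach (8 * t - 1) (sLB t) u) : t + 2 ≤ u.length := by
  obtain ⟨w, hw, hwu⟩ : ∃ w, GreedyStep (sLB t) w ∧ GreedyReach (8 * t - 2) w u := by
    rwa [show 8 * t - 1 = 8 * t - 2 + 1 by omega] at h
  obtain ⟨hlen, hw⟩ := greedyStep_sLB ht hw
  have := hw.length_le_of_fullReach hwu.fullReach
  omega

end BPE

/-- BPE is `Ω(n)`-far from optimal for compressed length: `|s| = 10t`;
with `k = 8t − 1` rounds some full merge sequence compresses `s` to length `1`,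
while every run of BPE leaves a string of length at least `t + 2`. -/
theorem stmt13 (t : ℕ) (ht : 2 < t) :
    (sLB t).length = 10 * t ∧
    (∃ u : List ℕ, FullReach (8 * t - 1) (sLB t) u ∧ u.length = 1) ∧
    (∀ u : List ℕ, GreedyReach (8 * t - 1) (sLB t) u → t + 2 ≤ u.length) :=
  ⟨length_sLB t, exists_fullReach_sLB_length_one (by omega),
    fun _ h => le_length_of_greedyReach_sLB ht h⟩
end
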